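/- arXiv:1510.02316 — 7 statements merged into one kernel-verified Lean document; each statement's English description precedes it below -/
import Mathlib

section
/- Let a ≥ 0, d > 0, and 0 < v ≤ sqrt((1/2)·d·a). Then the supremum of φ(x,y) = (v·x + a·y)/(x² + y² - a² - v²) over Ω = [a+d, ∞) × [0, v] equals v/d, attained at x = a+d, y = v. -/
/-!
Multiplying out, `φ(x, y) ≤ v / d` on `Ω` is the nonnegativity of
`v (x² + y² - a² - v²) - d (v x + a y) = v (x - (a + d)) (x + a) + (v - y) (d a - v (v + y))`,
and both terms are nonnegative for `x ≥ a + d`, `y ≤ v` once `2 v² ≤ d a`.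
At the corner `(a + d, v)` both vanish.
-/

lemma ratio_at_corner (a d v : ℝ) (hd : 0 < d) (ha : 0 ≤ a) :
    (v * (a + d) + a * v) / ((a + d) ^ 2 + v ^ 2 - a ^ 2 - v ^ 2) = v / d := by
  rw [div_eq_div_iff (by nlinarith) hd.ne']
  ring

lemma ratio_le_of_two_sq_le {a d v x y : ℝ} (hd : 0 < d) (hv : 0 < v) (hda : 2 * v ^ 2 ≤ d * a)
    (hx : a + d ≤ x) (hyv : y ≤ v) :
    (v * x + a * y) / (x ^ 2 + y ^ 2 - a ^ 2 - v ^ 2) ≤ v / d := by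
  have ha : 0 < a := by nlinarith
  have hden : 0 < x ^ 2 + y ^ 2 - a ^ 2 - v ^ 2 := by nlinarith
  have hexcess : v * (x ^ 2 + y ^ 2 - a ^ 2 - v ^ 2) - d * (v * x + a * y)
      = v * (x - (a + d)) * (x + a) + (v - y) * (d * a - v * (v + y)) := by ring
  have hfirst : 0 ≤ v * (x - (a + d)) * (x + a) := by
    have : 0 ≤ x - (a + d) := by linarith
    have : 0 ≤ x + a := by linarith
    positivity
  have hsecond : 0 ≤ (v - y) * (d * a - v * (v + y)) :=
    mul_nonneg (by linarith) (by nlinarith)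
  rw [div_le_div_iff₀ hden hd]
  linarith

theorem stmt_3_general (a d v : ℝ) (hd : 0 < d) (hv0 : 0 < v)
    (hv : v ≤ Real.sqrt ((1 / 2) * d * a)) :
    IsGreatest
      {z : ℝ | ∃ x y : ℝ, a + d ≤ x ∧ 0 ≤ y ∧ y ≤ v ∧
        z = (v * x + a * y) / (x ^ 2 + y ^ 2 - a ^ 2 - v ^ 2)} (v / d) ∧
    (v * (a + d) + a * v) / ((a + d) ^ 2 + v ^ 2 - a ^ 2 - v ^ 2) = v / d := by
  have hda : 2 * v ^ 2 ≤ d * a := by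
    have := (Real.le_sqrt' hv0).1 hv
    linarith
  have hcorner := ratio_at_corner a d v hd (by nlinarith)
  refine ⟨⟨⟨a + d, v, le_rfl, hv0.le, le_rfl, hcorner.symm⟩, ?_⟩, hcorner⟩
  rintro z ⟨x, y, hx, -, hyv, rfl⟩
  exact ratio_le_of_two_sq_le hd hv0 hda hx hyv

theorem stmt_3 (a d v : ℝ) (ha : 0 ≤ a) (hd : 0 < d) (hv0 : 0 < v)
    (hv : v ≤ Real.sqrt ((1 / 2) * d * a)) :
    IsGreatest
      {z : ℝ | ∃ x y : ℝ, a + d ≤ x ∧ 0 ≤ y ∧ y ≤ v ∧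
        z = (v * x + a * y) / (x ^ 2 + y ^ 2 - a ^ 2 - v ^ 2)} (v / d) ∧
    (v * (a + d) + a * v) / ((a + d) ^ 2 + v ^ 2 - a ^ 2 - v ^ 2) = v / d :=
  stmt_3_general a d v hd hv0 hv
end

section
/- Let a ≥ 0, d > 0, and sqrt((1/2)·d·a) < v < sqrt(d·(2a+d)). Then the supremum of φ(x,y) = (v·x + a·y)/(x² + y² - a² - v²) over Ω = [a+d, ∞) × [0, v] equals (1/2)·(v·(a+d) + sqrt(d·(2a+d))·sqrt(a² + v²))/(d·(2a+d) - v²). -/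
/-!
Put `c = a + d` and `D = c² - a² - v²`. The claimed value `M` is the positive root of
`4 D M² = 4 v c M + a²`, and for such an `M` one has the identity
`4 M (M (x² + y² - a² - v²) - (v x + a y)) = (2 M y - a)² + 4 M (2 M c - v) (x - c) + 4 M² (x - c)²`.
Since `v ≤ 2 M c`, the right-hand side is nonnegative on `Ω`, and it vanishes at
`(c, a / (2 M))`; this point lies in `Ω` exactly because `a ≤ 2 M v`, which is where the lower
bound on `v` enters.
-/

open Real

lemma quotient_denom_pos {a c v x : ℝ} (hc : 0 ≤ c) (hD : 0 < c ^ 2 - a ^ 2 - v ^ 2)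
    (hx : c ≤ x) (y : ℝ) : 0 < x ^ 2 + y ^ 2 - a ^ 2 - v ^ 2 := by
  nlinarith [sq_nonneg y, mul_le_mul hx hx hc (hc.trans hx)]

lemma quotient_defect_eq {a c v M : ℝ}
    (hM : 4 * M ^ 2 * (c ^ 2 - a ^ 2 - v ^ 2) = 4 * M * v * c + a ^ 2) (x y : ℝ) :
    4 * M * (M * (x ^ 2 + y ^ 2 - a ^ 2 - v ^ 2) - (v * x + a * y)) =
      (2 * M * y - a) ^ 2 + 4 * M * (2 * M * c - v) * (x - c) + 4 * M ^ 2 * (x - c) ^ 2 := by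
  linear_combination hM

theorem isGreatest_quotient_of_isRoot {a c v M : ℝ} (ha : 0 ≤ a) (hc : 0 ≤ c)
    (hD : 0 < c ^ 2 - a ^ 2 - v ^ 2) (hM0 : 0 < M)
    (hM : 4 * M ^ 2 * (c ^ 2 - a ^ 2 - v ^ 2) = 4 * M * v * c + a ^ 2)
    (hvM : v ≤ 2 * M * c) (haM : a ≤ 2 * M * v) :
    IsGreatest
      {z : ℝ | ∃ x y : ℝ, c ≤ x ∧ 0 ≤ y ∧ y ≤ v ∧
        z = (v * x + a * y) / (x ^ 2 + y ^ 2 - a ^ 2 - v ^ 2)} M := by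
  constructor
  · have hy : 2 * M * (a / (2 * M)) = a := by field_simp
    refine ⟨c, a / (2 * M), le_rfl, by positivity, ?_, ?_⟩
    · rw [div_le_iff₀ (by positivity)]
      linarith
    · have hden := quotient_denom_pos hc hD le_rfl (a / (2 * M))
      have hdefect := quotient_defect_eq hM c (a / (2 * M))
      rw [hy] at hdefect
      rw [eq_div_iff hden.ne']
      nlinarith
  · rintro z ⟨x, y, hx, -, -, rfl⟩
    have hden := quotient_denom_pos hc hD hx y
    have hdefect := quotient_defect_eq hM x y
    have hnonneg : 0 ≤ (2 * M * y - a) ^ 2 + 4 * M * (2 * M * c - v) * (x - c) +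
        4 * M ^ 2 * (x - c) ^ 2 := by
      have : 0 ≤ 2 * M * c - v := by linarith
      have : 0 ≤ x - c := by linarith
      positivity
    rw [div_le_iff₀ hden]
    nlinarith

noncomputable def quotientMax (a c v : ℝ) : ℝ :=
  (v * c + √((c ^ 2 - a ^ 2) * (a ^ 2 + v ^ 2))) / (2 * (c ^ 2 - a ^ 2 - v ^ 2))

section quotientMax

variable {a c v : ℝ}

lemma quotientMax_pos (hv : 0 < v) (hc : 0 < c) (hD : 0 < c ^ 2 - a ^ 2 - v ^ 2) :
    0 < quotientMax a c v := by
  unfold quotientMax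
  positivity

lemma two_mul_quotientMax_mul (hD : 0 < c ^ 2 - a ^ 2 - v ^ 2) :
    2 * quotientMax a c v * (c ^ 2 - a ^ 2 - v ^ 2) =
      v * c + √((c ^ 2 - a ^ 2) * (a ^ 2 + v ^ 2)) := by
  unfold quotientMax
  field_simp

lemma quotientMax_isRoot (hD : 0 < c ^ 2 - a ^ 2 - v ^ 2) :
    4 * quotientMax a c v ^ 2 * (c ^ 2 - a ^ 2 - v ^ 2) =
      4 * quotientMax a c v * v * c + a ^ 2 := by
  have hR := sq_sqrt (by nlinarith : 0 ≤ (c ^ 2 - a ^ 2) * (a ^ 2 + v ^ 2))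
  have hM := two_mul_quotientMax_mul hD
  refine mul_right_cancel₀ hD.ne' ?_
  linear_combination (2 * quotientMax a c v * (c ^ 2 - a ^ 2 - v ^ 2) +
    v * c + √((c ^ 2 - a ^ 2) * (a ^ 2 + v ^ 2)) - 2 * v * c) * hM + hR

lemma le_two_mul_quotientMax_mul_right (hv : 0 ≤ v) (hc : 0 ≤ c)
    (hD : 0 < c ^ 2 - a ^ 2 - v ^ 2) : v ≤ 2 * quotientMax a c v * c := by
  have hR := sqrt_nonneg ((c ^ 2 - a ^ 2) * (a ^ 2 + v ^ 2))
  have hM := two_mul_quotientMax_mul hD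
  refine le_of_mul_le_mul_right ?_ hD
  nlinarith [mul_nonneg hc hR, mul_nonneg hv (add_nonneg (sq_nonneg a) (sq_nonneg v))]

lemma le_two_mul_quotientMax_mul_left (ha : 0 ≤ a) (hv : 0 ≤ v) (hc : 0 ≤ c)
    (hv1 : a * (c - a) < 2 * v ^ 2) (hD : 0 < c ^ 2 - a ^ 2 - v ^ 2) :
    a ≤ 2 * quotientMax a c v * v := by
  have hsq : (a * (c ^ 2 - a ^ 2 - v ^ 2) - v ^ 2 * c) ^ 2 ≤
      v ^ 2 * ((c ^ 2 - a ^ 2) * (a ^ 2 + v ^ 2)) := by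
    have hgap : v ^ 2 * ((c ^ 2 - a ^ 2) * (a ^ 2 + v ^ 2)) -
        (a * (c ^ 2 - a ^ 2 - v ^ 2) - v ^ 2 * c) ^ 2 =
        a * (a + c) * (2 * v ^ 2 - a * (c - a)) * (c ^ 2 - a ^ 2 - v ^ 2) := by ring
    have : 0 ≤ 2 * v ^ 2 - a * (c - a) := by linarith
    nlinarith [mul_nonneg (mul_nonneg (mul_nonneg ha (add_nonneg ha hc)) this) hD.le]
  have hvR : a * (c ^ 2 - a ^ 2 - v ^ 2) - v ^ 2 * c ≤
      v * √((c ^ 2 - a ^ 2) * (a ^ 2 + v ^ 2)) := by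
    calc _ ≤ √(v ^ 2 * ((c ^ 2 - a ^ 2) * (a ^ 2 + v ^ 2))) := le_sqrt_of_sq_le hsq
      _ = _ := by rw [sqrt_mul (sq_nonneg v), sqrt_sq hv]
  have hM := two_mul_quotientMax_mul (a := a) hD
  refine le_of_mul_le_mul_right ?_ hD
  nlinarith

end quotientMax

theorem stmt_4 (a d v : ℝ) (ha : 0 ≤ a) (hd : 0 < d)
    (hv1 : Real.sqrt ((1 / 2) * d * a) < v) (hv2 : v < Real.sqrt (d * (2 * a + d))) :
    IsGreatest
      {z : ℝ | ∃ x y : ℝ, a + d ≤ x ∧ 0 ≤ y ∧ y ≤ v ∧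
        z = (v * x + a * y) / (x ^ 2 + y ^ 2 - a ^ 2 - v ^ 2)}
      ((1 / 2) * (v * (a + d) + Real.sqrt (d * (2 * a + d)) * Real.sqrt (a ^ 2 + v ^ 2)) /
        (d * (2 * a + d) - v ^ 2)) := by
  have hv : 0 < v := (sqrt_nonneg _).trans_lt hv1
  have hc : 0 < a + d := by linarith
  have hv1' : a * (a + d - a) < 2 * v ^ 2 := by
    have := (sqrt_lt' hv).mp hv1
    linarith
  have hD : 0 < (a + d) ^ 2 - a ^ 2 - v ^ 2 := by
    have := (lt_sqrt hv.le).mp hv2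
    linarith
  have hsq : (a + d) ^ 2 - a ^ 2 = d * (2 * a + d) := by ring
  have hmax : quotientMax a (a + d) v = (1 / 2) * (v * (a + d) +
      √(d * (2 * a + d)) * √(a ^ 2 + v ^ 2)) / (d * (2 * a + d) - v ^ 2) := by
    rw [quotientMax, hsq, sqrt_mul (by positivity), ← hsq]
    field_simp
  rw [← hmax]
  exact isGreatest_quotient_of_isRoot ha hc.le hD (quotientMax_pos hv hc hD) (quotientMax_isRoot hD)
    (le_two_mul_quotientMax_mul_right hv.le hc.le hD)
    (le_two_mul_quotientMax_mul_left ha hv.le hc.le hv1' hD)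
end

section
/- Fix d > 0 and 0 ≤ v < d. Define ϰ(D) = 2v/d if v ≤ (1/2)·sqrt(d·(D-2d)), and ϰ(D) = (v·D + sqrt(d·(D-d))·sqrt((D-2d)² + 4v²))/(2·(d·(D-d) - v²)) otherwise. Then ϰ is nonincreasing on [2d, ∞). -/
/-!
Off the threshold, `ϰ(D)` is the larger root of
`q_D(x) = (d(D-d) - v²) x² - v D x - (D - 2d)²/4`; the product of square roots in the formula is
the square root of the discriminant `v²D² + (d(D-d) - v²)(D-2d)² = d(D-d)((D-2d)² + 4v²)`.
Since `q_D(2v/d) = -(2v²/d - (D-2d)/2)² ≤ 0`, this root is never below the constant `2v/d` of the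
other branch. For `D₁ ≤ D₂` off the threshold, `q_{D₁} - q_{D₂} = (D₁ - D₂)(d x² - v x - (D₁+D₂-4d)/4)`,
and at `x = ϰ(D₂) ≥ 2v/d` the last factor is positive because `d(D₂ - 2d) < 4v²`; hence
`q_{D₁}(ϰ(D₂)) ≤ 0`, i.e. `ϰ(D₂) ≤ ϰ(D₁)`.
-/

open Real

noncomputable def largerRoot (a b c : ℝ) : ℝ := (b + √(b ^ 2 + 4 * a * c)) / (2 * a)

lemma largerRoot_spec {a b c : ℝ} (ha : a ≠ 0) (hdisc : 0 ≤ b ^ 2 + 4 * a * c) :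
    a * largerRoot a b c ^ 2 - b * largerRoot a b c = c := by
  have hexpand : a * largerRoot a b c ^ 2 - b * largerRoot a b c
      = (√(b ^ 2 + 4 * a * c) ^ 2 - b ^ 2) / (4 * a) := by
    unfold largerRoot
    field_simp
    ring
  rw [hexpand, sq_sqrt hdisc]
  field_simp
  ring

lemma le_largerRoot {a b c y : ℝ} (ha : 0 < a) (hy : a * y ^ 2 - b * y ≤ c) :
    y ≤ largerRoot a b c := by
  have hsq : (2 * a * y - b) ^ 2 ≤ b ^ 2 + 4 * a * c := by nlinarith
  have := (le_abs_self _).trans (abs_le_sqrt hsq)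
  rw [largerRoot, le_div_iff₀ (by positivity)]
  linarith

noncomputable def kappaRoot (d v D : ℝ) : ℝ :=
  largerRoot (d * (D - d) - v ^ 2) (v * D) ((D - 2 * d) ^ 2 / 4)

section

variable {d v : ℝ}

lemma kappaRoot_eq (hd : 0 < d) {D : ℝ} (hD : 2 * d ≤ D) :
    (v * D + √(d * (D - d)) * √((D - 2 * d) ^ 2 + 4 * v ^ 2)) / (2 * (d * (D - d) - v ^ 2))
      = kappaRoot d v D := by
  rw [kappaRoot, largerRoot, ← sqrt_mul (by nlinarith)]
  ring_nf

lemma kappaRoot_coeff_pos (hd : 0 < d) (hv : 0 ≤ v) (hvd : v < d) {D : ℝ} (hD : 2 * d ≤ D) :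
    0 < d * (D - d) - v ^ 2 := by
  nlinarith

lemma two_mul_div_le_kappaRoot (hd : 0 < d) (hv : 0 ≤ v) (hvd : v < d) {D : ℝ}
    (hD : 2 * d ≤ D) : 2 * v / d ≤ kappaRoot d v D := by
  refine le_largerRoot (kappaRoot_coeff_pos hd hv hvd hD) ?_
  have hq : (d * (D - d) - v ^ 2) * (2 * v / d) ^ 2 - v * D * (2 * v / d)
      = (D - 2 * d) ^ 2 / 4 - (2 * v ^ 2 / d - (D - 2 * d) / 2) ^ 2 := by
    field_simp
    ring
  rw [hq]
  linarith [sq_nonneg (2 * v ^ 2 / d - (D - 2 * d) / 2)]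

lemma kappaRoot_le_kappaRoot (hd : 0 < d) (hv : 0 ≤ v) (hvd : v < d) {D₁ D₂ : ℝ}
    (hD₁ : 2 * d ≤ D₁) (h₁₂ : D₁ ≤ D₂) (hD₂ : d * (D₂ - 2 * d) < 4 * v ^ 2) :
    kappaRoot d v D₂ ≤ kappaRoot d v D₁ := by
  set x := kappaRoot d v D₂
  have hroot : (d * (D₂ - d) - v ^ 2) * x ^ 2 - v * D₂ * x = (D₂ - 2 * d) ^ 2 / 4 :=
    largerRoot_spec (kappaRoot_coeff_pos hd hv hvd (hD₁.trans h₁₂)).ne' (by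
      nlinarith [kappaRoot_coeff_pos hd hv hvd (hD₁.trans h₁₂), sq_nonneg (D₂ - 2 * d)])
  have hx : 2 * v ≤ d * x := by
    have := two_mul_div_le_kappaRoot hd hv hvd (hD₁.trans h₁₂)
    rwa [div_le_iff₀ hd, mul_comm x] at this
  have hgap : (D₁ + D₂ - 4 * d) / 4 ≤ d * x ^ 2 - v * x := by
    have : 2 * v ^ 2 ≤ d * (x * (d * x - v)) := by nlinarith
    nlinarith
  refine le_largerRoot (kappaRoot_coeff_pos hd hv hvd hD₁) ?_
  nlinarith [mul_nonneg (sub_nonneg.mpr h₁₂) (sub_nonneg.mpr hgap)]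

end

lemma pos_and_lt_of_half_sqrt_lt {x v : ℝ} (h : 1 / 2 * √x < v) : 0 < v ∧ x < 4 * v ^ 2 := by
  have hv : 0 < v := lt_of_le_of_lt (by positivity) h
  refine ⟨hv, ?_⟩
  have := (sqrt_lt' (by positivity : 0 < 2 * v)).mp (by linarith)
  linarith

theorem stmt_5_general (d v : ℝ) (hd : 0 < d) (hvd : v < d)
    (κ : ℝ → ℝ)
    (hκ : ∀ D : ℝ, κ D =
      if v ≤ (1 / 2) * Real.sqrt (d * (D - 2 * d)) then 2 * v / d
      else (v * D + Real.sqrt (d * (D - d)) * Real.sqrt ((D - 2 * d) ^ 2 + 4 * v ^ 2)) /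
        (2 * (d * (D - d) - v ^ 2))) :
    AntitoneOn κ (Set.Ici (2 * d)) := by
  intro D₁ hD₁ D₂ hD₂ h₁₂
  rw [Set.mem_Ici] at hD₁ hD₂
  rw [hκ, hκ]
  split_ifs with h₂ h₁ h₁
  · exact le_rfl
  · obtain ⟨hv, -⟩ := pos_and_lt_of_half_sqrt_lt (not_le.mp h₁)
    rw [kappaRoot_eq hd hD₁]
    exact two_mul_div_le_kappaRoot hd hv.le hvd hD₁
  · exact absurd (h₁.trans (by gcongr)) h₂
  · obtain ⟨hv, hD₂'⟩ := pos_and_lt_of_half_sqrt_lt (not_le.mp h₂)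
    rw [kappaRoot_eq hd hD₁, kappaRoot_eq hd hD₂]
    exact kappaRoot_le_kappaRoot hd hv.le hvd hD₁ h₁₂ hD₂'

theorem stmt_5 (d v : ℝ) (hd : 0 < d) (hv0 : 0 ≤ v) (hvd : v < d)
    (κ : ℝ → ℝ)
    (hκ : ∀ D : ℝ, κ D =
      if v ≤ (1 / 2) * Real.sqrt (d * (D - 2 * d)) then 2 * v / d
      else (v * D + Real.sqrt (d * (D - d)) * Real.sqrt ((D - 2 * d) ^ 2 + 4 * v ^ 2)) /
        (2 * (d * (D - d) - v ^ 2))) :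
    AntitoneOn κ (Set.Ici (2 * d)) :=
  stmt_5_general d v hd hvd κ hκ
end

section
/- Fix d > 0 and 0 ≤ v < d. With ϰ(D) defined as in the a priori tan Θ theorem, the maximum of ϰ(D) over D ∈ [2d, ∞) is attained at D = 2d and equals 2vd/(d² - v²) = tan(2·arctan(v/d)). -/
/-!
Where `v ≤ √(d (D - 2d)) / 2`, `ϰ = tanThetaBound d v` is the constant `2v/d ≤ 2vd/(d² - v²)`.
Elsewhere, with `t = D - 2d`, the failed threshold gives `d t < 4v²`, which is exactly what makes
`√(d (D - d)) · √(t² + 4v²) ≤ 2v (D - d)`; inserting this estimate leaves the inequality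
`t (d² + 3v²) ≥ 0`. At `D = 2d` the square roots are `d` and `2v`, and `2vd/(d² - v²)` is the
double-angle formula for `tan` at `arctan (v/d)`.
-/

open Real

noncomputable def tanThetaBound (d v D : ℝ) : ℝ :=
  if v ≤ (1 / 2) * √(d * (D - 2 * d)) then 2 * v / d
  else (v * D + √(d * (D - d)) * √((D - 2 * d) ^ 2 + 4 * v ^ 2)) / (2 * (d * (D - d) - v ^ 2))

theorem tan_two_mul_arctan_div (v d : ℝ) :
    tan (2 * arctan (v / d)) = 2 * v * d / (d ^ 2 - v ^ 2) := by
  rcases eq_or_ne d 0 with rfl | hd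
  · simp
  rw [tan_two_mul, tan_arctan, div_pow, one_sub_div (pow_ne_zero 2 hd), div_div_eq_mul_div]
  field_simp

theorem sqrt_mul_sqrt_le_of_mul_sub_le {d v D : ℝ} (hd : 0 ≤ d) (hv : 0 ≤ v) (hD : 2 * d ≤ D)
    (h : d * (D - 2 * d) ≤ 4 * v ^ 2) :
    √(d * (D - d)) * √((D - 2 * d) ^ 2 + 4 * v ^ 2) ≤ 2 * v * (D - d) := by
  rw [← sqrt_mul (by nlinarith), sqrt_le_left (by nlinarith)]
  nlinarith [mul_nonneg (sub_nonneg.2 hD) (sub_nonneg.2 h)]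

theorem tanThetaBound_two_mul {d v : ℝ} (hd : 0 ≤ d) (hv : 0 ≤ v) :
    tanThetaBound d v (2 * d) = 2 * v * d / (d ^ 2 - v ^ 2) := by
  rcases hv.eq_or_lt with rfl | hv
  · simp [tanThetaBound]
  have hsqrt₁ : √(d * (2 * d - d)) = d := by rw [two_mul, add_sub_cancel_right, sqrt_mul_self hd]
  have hsqrt₂ : √((2 * d - 2 * d) ^ 2 + 4 * v ^ 2) = 2 * v := by
    rw [sub_self, show (0 : ℝ) ^ 2 + 4 * v ^ 2 = (2 * v) ^ 2 by ring, sqrt_sq (by positivity)]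
  rw [tanThetaBound, hsqrt₁, hsqrt₂, sub_self, mul_zero, sqrt_zero, mul_zero, if_neg hv.not_ge,
    ← mul_div_mul_left (2 * v * d) (d ^ 2 - v ^ 2) two_ne_zero]
  ring

theorem tanThetaBound_le {d v D : ℝ} (hd : 0 < d) (hv : 0 ≤ v) (hvd : v < d) (hD : 2 * d ≤ D) :
    tanThetaBound d v D ≤ 2 * v * d / (d ^ 2 - v ^ 2) := by
  have hden : 0 < d ^ 2 - v ^ 2 := by nlinarith
  rw [tanThetaBound]
  split_ifs with hthreshold
  · rw [div_le_div_iff₀ hd hden]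
    nlinarith [mul_nonneg hv (sq_nonneg v)]
  · have hsmall : d * (D - 2 * d) ≤ 4 * v ^ 2 := by
      have hroot : √(d * (D - 2 * d)) < 2 * v := by linarith [not_le.1 hthreshold]
      have h := (sqrt_lt' (lt_of_le_of_lt (sqrt_nonneg _) hroot)).1 hroot
      linarith
    have hroots := sqrt_mul_sqrt_le_of_mul_sub_le hd.le hv hD hsmall
    rw [div_le_div_iff₀ (by nlinarith) hden]
    nlinarith [mul_le_mul_of_nonneg_right hroots hden.le, mul_nonneg (sub_nonneg.2 hD)
      (mul_nonneg hv (add_nonneg (sq_nonneg d) (sq_nonneg v)))]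

theorem stmt_6 (d v : ℝ) (hd : 0 < d) (hv0 : 0 ≤ v) (hvd : v < d)
    (κ : ℝ → ℝ)
    (hκ : ∀ D : ℝ, κ D =
      if v ≤ (1 / 2) * Real.sqrt (d * (D - 2 * d)) then 2 * v / d
      else (v * D + Real.sqrt (d * (D - d)) * Real.sqrt ((D - 2 * d) ^ 2 + 4 * v ^ 2)) /
        (2 * (d * (D - d) - v ^ 2))) :
    (∀ D ∈ Set.Ici (2 * d), κ D ≤ κ (2 * d)) ∧
    κ (2 * d) = 2 * v * d / (d ^ 2 - v ^ 2) ∧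
    2 * v * d / (d ^ 2 - v ^ 2) = Real.tan (2 * Real.arctan (v / d)) := by
  obtain rfl : κ = tanThetaBound d v := funext hκ
  have hvalue := tanThetaBound_two_mul hd.le hv0
  refine ⟨fun D hD => ?_, hvalue, (tan_two_mul_arctan_div v d).symm⟩
  rw [hvalue]
  exact tanThetaBound_le hd hv0 hvd hD
end

section
/- Let 0 < d ≤ D/2 and 0 ≤ v < sqrt(d·D). Define r = v·tan((1/2)·arctan(2v/(D - d))). Then r < d. -/
/-! By the half-angle formula, `tan (arctan (a / s) / 2) = a / (s + √(s² + a²))` for `s > 0`.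
With `s = D - d` and `a = 2v` this gives `r = 2v² / (s + √(s² + 4v²))`, and `r < d` becomes
`2v² - d s < d √(s² + 4v²)`; after squaring this is `v² < d (s + d) = d D`. -/

open Real

theorem Real.tan_half_arctan (t : ℝ) : tan (arctan t / 2) = t / (1 + √(1 + t ^ 2)) := by
  have hcos_pos : 0 < cos (arctan t / 2) := cos_pos_of_mem_Ioo
    ⟨by linarith [neg_pi_div_two_lt_arctan t, pi_pos], by linarith [arctan_lt_pi_div_two t, pi_pos]⟩
  have hw : 0 < √(1 + t ^ 2) := by positivity
  have hdouble : arctan t = 2 * (arctan t / 2) := by ring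
  have hsin := sin_arctan t
  have hcos := cos_arctan t
  rw [hdouble, sin_two_mul] at hsin
  rw [hdouble, cos_two_mul] at hcos
  field_simp at hsin hcos
  rw [tan_eq_sin_div_cos, div_eq_div_iff hcos_pos.ne' (by positivity)]
  refine mul_right_cancel₀ (mul_pos (mul_pos two_pos hw) hcos_pos).ne' ?_
  linear_combination (1 + √(1 + t ^ 2)) * hsin - t * hcos

theorem Real.tan_half_arctan_div {s : ℝ} (hs : 0 < s) (a : ℝ) :
    tan (arctan (a / s) / 2) = a / (s + √(s ^ 2 + a ^ 2)) := by
  have hsqrt : √(1 + (a / s) ^ 2) = √(s ^ 2 + a ^ 2) / s := by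
    rw [show 1 + (a / s) ^ 2 = (s ^ 2 + a ^ 2) / s ^ 2 by field_simp,
      sqrt_div' _ (sq_nonneg s), sqrt_sq hs.le]
  rw [tan_half_arctan, hsqrt]
  field_simp

theorem mul_two_mul_lt_mul_add_sqrt {d s v : ℝ} (hd : 0 < d) (hs : 0 < s)
    (hv : v ^ 2 < d * (s + d)) : v * (2 * v) < d * (s + √(s ^ 2 + (2 * v) ^ 2)) := by
  have hq := sq_sqrt (show 0 ≤ s ^ 2 + (2 * v) ^ 2 by positivity)
  have hq_nonneg := sqrt_nonneg (s ^ 2 + (2 * v) ^ 2)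
  nlinarith [sq_nonneg v, sq_nonneg (2 * v ^ 2 - d * s + d * √(s ^ 2 + (2 * v) ^ 2))]

theorem stmt_8 (D d v : ℝ) (hd : 0 < d) (hD : d ≤ D / 2) (hv0 : 0 ≤ v)
    (hv : v < Real.sqrt (d * D)) :
    v * Real.tan ((1 / 2) * Real.arctan (2 * v / (D - d))) < d := by
  have hs : 0 < D - d := by linarith
  have hv_sq : v ^ 2 < d * ((D - d) + d) := by
    rw [sub_add_cancel]
    exact (lt_sqrt hv0).mp hv
  rw [one_div_mul_eq_div, tan_half_arctan_div hs, ← mul_div_assoc, div_lt_iff₀ (by positivity)]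
  exact mul_two_mul_lt_mul_add_sqrt hd hs hv_sq
end

section
/- Let a ≥ 0, d > 0, v > 0 with v² < d(2a+d), and let μ ∈ (0,1), x ≥ a+d, y ∈ [0,v] satisfy μ/(1-μ²) ≤ (v·x + a·y)/(x² + y² - a² - v²). Then μ ≤ tan((1/2)·arctan ϰ(2a+2d, d, v)). -/
/-!
Let `φ(x, y) = P / Q` with `P = v x + a y` and `Q = x² + y² - a² - v²`. If `2 v² ≤ a d` the bound
`d P ≤ v Q` holds directly. Otherwise, on `x ≥ a + d` the ratio is largest at `x = a + d`, where
`Q = c + y²` with `c = d (2a + d) - v² > 0`; the maximum over `y` of `2 (A + a y) / (c + y²)`,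
`A = v (a + d)`, is `(A + √(A² + a² c)) / c`, and `A² + a² c = d (2a + d) (a² + v²)`.
Either way `2 φ ≤ ϰ`, and since `2μ / (1 - μ²) = tan (2 arctan μ)` the claim follows.
-/

open Real

theorem le_tan_half_arctan_of_two_mul_div_le {μ k : ℝ} (hμ₀ : -1 < μ) (hμ₁ : μ < 1)
    (h : 2 * μ / (1 - μ ^ 2) ≤ k) : μ ≤ tan (1 / 2 * arctan k) := by
  have hdouble : 2 * arctan μ ≤ arctan k := by
    rw [two_mul_arctan hμ₀ hμ₁]
    exact arctan_le_arctan_iff.mpr h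
  calc μ = tan (arctan μ) := (tan_arctan μ).symm
    _ ≤ tan (1 / 2 * arctan k) :=
      strictMonoOn_tan.monotoneOn ⟨neg_pi_div_two_lt_arctan μ, arctan_lt_pi_div_two μ⟩
        ⟨by linarith [neg_pi_div_two_lt_arctan k, pi_pos],
          by linarith [arctan_lt_pi_div_two k, pi_pos]⟩
        (by linarith)

theorem two_mul_add_mul_div_add_sq_le {A a c : ℝ} (hA : 0 < A) (hc : 0 < c) (y : ℝ) :
    2 * (A + a * y) / (c + y ^ 2) ≤ (A + √(A ^ 2 + a ^ 2 * c)) / c := by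
  set R := √(A ^ 2 + a ^ 2 * c)
  have hR : R ^ 2 = A ^ 2 + a ^ 2 * c := sq_sqrt (by positivity)
  have hAR : 0 < A + R := by positivity
  -- equality holds at `y = a c / (A + R)`
  have key : (A + R) * ((A + R) * (c + y ^ 2) - 2 * (A + a * y) * c)
      = ((A + R) * y - a * c) ^ 2 := by
    linear_combination c * hR
  rw [div_le_div_iff₀ (by positivity) hc]
  nlinarith [sq_nonneg ((A + R) * y - a * c)]

noncomputable def phi (a v x y : ℝ) : ℝ := (v * x + a * y) / (x ^ 2 + y ^ 2 - a ^ 2 - v ^ 2)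

section Phi

variable {a d v x y : ℝ}

theorem phi_le_phi_add (ha : 0 ≤ a) (hd : 0 ≤ d) (hv : 0 ≤ v) (hy₀ : 0 ≤ y) (hyv : y ≤ v)
    (hQ : 0 < d * (2 * a + d) + y ^ 2 - v ^ 2) (hx : a + d ≤ x) :
    phi a v x y ≤ phi a v (a + d) y := by
  have hQ' : (a + d) ^ 2 + y ^ 2 - a ^ 2 - v ^ 2 = d * (2 * a + d) + y ^ 2 - v ^ 2 := by ring
  have ht : 0 ≤ x - (a + d) := by linarith
  have hQx : 0 < x ^ 2 + y ^ 2 - a ^ 2 - v ^ 2 := by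
    nlinarith [mul_nonneg ht (by linarith : 0 ≤ x + a + d)]
  -- `φ(x, y) - φ(a + d, y)` has the sign of `(x - (a + d)) (v Q₀ - P₀ (x + a + d))`,
  -- where `P₀`, `Q₀` are `P`, `Q` at `x = a + d`
  have hslope : v * (d * (2 * a + d) + y ^ 2 - v ^ 2) ≤ (v * (a + d) + a * y) * (x + a + d) := by
    nlinarith [mul_nonneg hv (mul_nonneg (sub_nonneg.2 hyv) (by linarith : 0 ≤ v + y)),
      mul_nonneg (mul_nonneg ha hy₀) ht, mul_nonneg (mul_nonneg ha hy₀) (by linarith : 0 ≤ a + d),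
      mul_nonneg (mul_nonneg hv (by linarith : 0 ≤ a + d)) ht,
      mul_nonneg hv (by positivity : 0 ≤ 2 * a ^ 2 + 2 * a * d + d ^ 2)]
  rw [phi, phi, hQ', div_le_div_iff₀ hQx hQ]
  nlinarith [mul_le_mul_of_nonneg_left hslope ht]

theorem two_mul_phi_le_of_two_mul_sq_le (ha : 0 ≤ a) (hd : 0 < d) (hv : 0 ≤ v) (hyv : y ≤ v)
    (hx : a + d ≤ x) (hsmall : 2 * v ^ 2 ≤ a * d) :
    2 * phi a v x y ≤ 2 * v / d := by
  have hQx : 0 < x ^ 2 + y ^ 2 - a ^ 2 - v ^ 2 := by nlinarith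
  have hfactor : v * (x ^ 2 + y ^ 2 - a ^ 2 - v ^ 2) - d * (v * x + a * y)
      = v * ((x - (a + d)) * (x + a)) + (v - y) * (a * d - v * y - v ^ 2) := by ring
  have h₁ : 0 ≤ v * ((x - (a + d)) * (x + a)) := by
    have : 0 ≤ x - (a + d) := by linarith
    have : 0 ≤ x + a := by linarith
    positivity
  have h₂ : 0 ≤ (v - y) * (a * d - v * y - v ^ 2) :=
    mul_nonneg (by linarith) (by nlinarith [mul_le_mul_of_nonneg_left hyv hv])
  rw [phi, mul_div_assoc, mul_le_mul_iff_right₀ two_pos, div_le_div_iff₀ hQx hd]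
  linarith

theorem two_mul_phi_le_of_sq_lt (ha : 0 ≤ a) (hd : 0 < d) (hv : 0 < v) (hy₀ : 0 ≤ y)
    (hyv : y ≤ v) (hx : a + d ≤ x) (hvS : v ^ 2 < d * (2 * a + d)) :
    2 * phi a v x y
      ≤ (v * (a + d) + √(d * (2 * a + d)) * √(a ^ 2 + v ^ 2)) / (d * (2 * a + d) - v ^ 2) := by
  set c := d * (2 * a + d) - v ^ 2
  have hc : 0 < c := by linarith
  have hQ : d * (2 * a + d) + y ^ 2 - v ^ 2 = c + y ^ 2 := by ring
  have hdisc : (v * (a + d)) ^ 2 + a ^ 2 * c = d * (2 * a + d) * (a ^ 2 + v ^ 2) := by ring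
  calc 2 * phi a v x y ≤ 2 * phi a v (a + d) y := by
        gcongr
        exact phi_le_phi_add ha hd.le hv.le hy₀ hyv (by rw [hQ]; positivity) hx
    _ = 2 * (v * (a + d) + a * y) / (c + y ^ 2) := by
        rw [phi, mul_div_assoc]; congr 2; ring
    _ ≤ (v * (a + d) + √((v * (a + d)) ^ 2 + a ^ 2 * c)) / c :=
        two_mul_add_mul_div_add_sq_le (by positivity) hc y
    _ = _ := by rw [hdisc, sqrt_mul (by positivity)]

end Phi

theorem kappa_formula_two_mul_add {a d v : ℝ} (ha : 0 ≤ a) (hd : 0 ≤ d) (hv : 0 ≤ v) :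
    (if v ≤ 1 / 2 * √(d * (2 * a + 2 * d - 2 * d)) then 2 * v / d
      else (v * (2 * a + 2 * d) + √(d * (2 * a + 2 * d - d)) *
          √((2 * a + 2 * d - 2 * d) ^ 2 + 4 * v ^ 2)) /
        (2 * (d * (2 * a + 2 * d - d) - v ^ 2)))
      = if 2 * v ^ 2 ≤ a * d then 2 * v / d
        else (v * (a + d) + √(d * (2 * a + d)) * √(a ^ 2 + v ^ 2)) / (d * (2 * a + d) - v ^ 2) := by
  have hcond : v ≤ 1 / 2 * √(d * (2 * a + 2 * d - 2 * d)) ↔ 2 * v ^ 2 ≤ a * d := by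
    rw [show d * (2 * a + 2 * d - 2 * d) = 2 * (a * d) by ring]
    calc v ≤ 1 / 2 * √(2 * (a * d)) ↔ 2 * v ≤ √(2 * (a * d)) := by
          constructor <;> intro h <;> linarith
      _ ↔ (2 * v) ^ 2 ≤ 2 * (a * d) := le_sqrt (by positivity) (by positivity)
      _ ↔ 2 * v ^ 2 ≤ a * d := by constructor <;> intro h <;> linarith
  have hsqrt : √((2 * a + 2 * d - 2 * d) ^ 2 + 4 * v ^ 2) = 2 * √(a ^ 2 + v ^ 2) := by
    rw [show (2 * a + 2 * d - 2 * d) ^ 2 + 4 * v ^ 2 = 2 ^ 2 * (a ^ 2 + v ^ 2) by ring,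
      sqrt_mul (by positivity), sqrt_sq two_pos.le]
  simp only [hcond, hsqrt, show 2 * a + 2 * d - d = 2 * a + d by ring]
  congr 1
  rw [show v * (2 * a + 2 * d) + √(d * (2 * a + d)) * (2 * √(a ^ 2 + v ^ 2))
      = 2 * (v * (a + d) + √(d * (2 * a + d)) * √(a ^ 2 + v ^ 2)) by ring,
    mul_div_mul_left _ _ two_ne_zero]

theorem stmt_11 (a d v μ x y : ℝ) (ha : 0 ≤ a) (hd : 0 < d) (hv0 : 0 < v)
    (hv : v ^ 2 < d * (2 * a + d)) (hμ0 : 0 < μ) (hμ1 : μ < 1)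
    (hx : a + d ≤ x) (hy0 : 0 ≤ y) (hyv : y ≤ v)
    (h : μ / (1 - μ ^ 2) ≤ (v * x + a * y) / (x ^ 2 + y ^ 2 - a ^ 2 - v ^ 2))
    (κ : ℝ → ℝ → ℝ → ℝ)
    (hκ : ∀ D d v : ℝ, κ D d v =
      if v ≤ (1 / 2) * Real.sqrt (d * (D - 2 * d)) then 2 * v / d
      else (v * D + Real.sqrt (d * (D - d)) * Real.sqrt ((D - 2 * d) ^ 2 + 4 * v ^ 2)) /
        (2 * (d * (D - d) - v ^ 2))) :
    μ ≤ Real.tan ((1 / 2) * Real.arctan (κ (2 * a + 2 * d) d v)) := by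
  have hbound : 2 * phi a v x y ≤ κ (2 * a + 2 * d) d v := by
    rw [hκ, kappa_formula_two_mul_add ha hd.le hv0.le]
    split_ifs with hsmall
    · exact two_mul_phi_le_of_two_mul_sq_le ha hd hv0.le hyv hx hsmall
    · exact two_mul_phi_le_of_sq_lt ha hd hv0 hy0 hyv hx hv
  refine le_tan_half_arctan_of_two_mul_div_le (by linarith) hμ1 ?_
  calc 2 * μ / (1 - μ ^ 2) = 2 * (μ / (1 - μ ^ 2)) := mul_div_assoc ..
    _ ≤ 2 * phi a v x y := by rw [phi]; gcongr
    _ ≤ κ (2 * a + 2 * d) d v := hbound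
end

section
/- Let A₀, A₁ be self-adjoint operators on finite-dimensional Hilbert spaces H₀, H₁, and B : H₁ → H₀ a linear map. Suppose X : H₀ → H₁ satisfies the Riccati equation X A₀ - A₁ X + X B X = B*. Then Λ₀ := (I + X*X)^{1/2}(A₀ + BX)(I + X*X)^{-1/2} is self-adjoint on H₀. -/
/-!
Substituting the Riccati equation `X (A₀ + B X) = B* + A₁ X` gives
`(I + X*X)(A₀ + B X) = A₀ + (B X + (B X)*) + X* A₁ X`, which is self-adjoint.
For a self-adjoint invertible `S` with `S² M` self-adjoint,
`S M S⁻¹ = S⁻¹ (S² M) S⁻¹` is self-adjoint; apply this with `S² = I + X*X`.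
-/

open ContinuousLinearMap

theorem IsSelfAdjoint.mul_mul_inverse_of_isSelfAdjoint_mul_self_mul {R : Type*} [Monoid R]
    [StarMul R] {s t m : R} (hs : IsSelfAdjoint s) (hst : s * t = 1) (hts : t * s = 1)
    (hssm : IsSelfAdjoint (s * s * m)) :
    IsSelfAdjoint (s * m * t) := by
  have ht : star t = t :=
    left_inv_eq_right_inv (by rw [← hs.star_eq, ← star_mul, hst, star_one]) hst
  have hmss : star m * s * s = s * s * m := by
    simpa only [star_mul, hs.star_eq, mul_assoc] using hssm.star_eq
  calc star (s * m * t) = t * star m * s := by simp only [star_mul, ht, hs.star_eq, mul_assoc]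
    _ = t * (star m * s * s) * t := by simp only [mul_assoc, hst, mul_one]
    _ = s * m * t := by rw [hmss]; simp only [← mul_assoc, hts, one_mul]

section Riccati

variable {𝕜 E F : Type*} [RCLike 𝕜]
  [NormedAddCommGroup E] [InnerProductSpace 𝕜 E] [CompleteSpace E]
  [NormedAddCommGroup F] [InnerProductSpace 𝕜 F] [CompleteSpace F]

variable {A₀ : E →L[𝕜] E} {A₁ : F →L[𝕜] F} {B : F →L[𝕜] E} {X : E →L[𝕜] F}

theorem one_add_adjoint_comp_self_comp_eq_of_riccati
    (hRic : X ∘L A₀ - A₁ ∘L X + X ∘L B ∘L X = adjoint B) :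
    (1 + adjoint X ∘L X) ∘L (A₀ + B ∘L X)
      = A₀ + (B ∘L X + adjoint (B ∘L X)) + adjoint X ∘L A₁ ∘L X := by
  have hXM : X ∘L (A₀ + B ∘L X) = adjoint B + A₁ ∘L X := by
    rw [comp_add, ← hRic, ← comp_assoc]
    abel
  rw [add_comp, one_def, id_comp, comp_assoc, hXM, adjoint_comp, comp_add]
  abel

theorem isSelfAdjoint_one_add_adjoint_comp_self_comp_of_riccati
    (hA₀ : IsSelfAdjoint A₀) (hA₁ : IsSelfAdjoint A₁)
    (hRic : X ∘L A₀ - A₁ ∘L X + X ∘L B ∘L X = adjoint B) :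
    IsSelfAdjoint ((1 + adjoint X ∘L X) ∘L (A₀ + B ∘L X)) := by
  rw [one_add_adjoint_comp_self_comp_eq_of_riccati hRic]
  exact (hA₀.add (.add_star_self _)).add (hA₁.adjoint_conj X)

end Riccati

theorem stmt_13_general {H₀ H₁ : Type*}
    [NormedAddCommGroup H₀] [InnerProductSpace ℂ H₀] [FiniteDimensional ℂ H₀]
    [NormedAddCommGroup H₁] [InnerProductSpace ℂ H₁] [FiniteDimensional ℂ H₁]
    (A₀ : H₀ →L[ℂ] H₀) (A₁ : H₁ →L[ℂ] H₁) (B : H₁ →L[ℂ] H₀)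
    (hA₀ : IsSelfAdjoint A₀) (hA₁ : IsSelfAdjoint A₁)
    (X : H₀ →L[ℂ] H₁)
    (hRic : X ∘L A₀ - A₁ ∘L X + X ∘L B ∘L X = ContinuousLinearMap.adjoint B)
    -- S = (I + X*X)^{1/2}: a positive self-adjoint square root of I + X*X
    (S T : H₀ →L[ℂ] H₀) (hSsa : IsSelfAdjoint S)
    (hSsq : S ∘L S = 1 + (ContinuousLinearMap.adjoint X) ∘L X)
    -- T = S⁻¹ = (I + X*X)^{-1/2}
    (hST : S ∘L T = 1) (hTS : T ∘L S = 1) :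
    IsSelfAdjoint (S ∘L (A₀ + B ∘L X) ∘L T) := by
  have hSSM : IsSelfAdjoint (S * S * (A₀ + B ∘L X)) := by
    rw [mul_def, mul_def, hSsq]
    exact isSelfAdjoint_one_add_adjoint_comp_self_comp_of_riccati hA₀ hA₁ hRic
  have h := hSsa.mul_mul_inverse_of_isSelfAdjoint_mul_self_mul hST hTS hSSM
  rwa [mul_assoc] at h

theorem stmt_13 {H₀ H₁ : Type*}
    [NormedAddCommGroup H₀] [InnerProductSpace ℂ H₀] [FiniteDimensional ℂ H₀]
    [NormedAddCommGroup H₁] [InnerProductSpace ℂ H₁] [FiniteDimensional ℂ H₁]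
    (A₀ : H₀ →L[ℂ] H₀) (A₁ : H₁ →L[ℂ] H₁) (B : H₁ →L[ℂ] H₀)
    (hA₀ : IsSelfAdjoint A₀) (hA₁ : IsSelfAdjoint A₁)
    (X : H₀ →L[ℂ] H₁)
    (hRic : X ∘L A₀ - A₁ ∘L X + X ∘L B ∘L X = ContinuousLinearMap.adjoint B)
    -- S = (I + X*X)^{1/2}: a positive self-adjoint square root of I + X*X
    (S T : H₀ →L[ℂ] H₀) (hSsa : IsSelfAdjoint S) (hSpos : S.IsPositive)
    (hSsq : S ∘L S = 1 + (ContinuousLinearMap.adjoint X) ∘L X)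
    -- T = S⁻¹ = (I + X*X)^{-1/2}
    (hST : S ∘L T = 1) (hTS : T ∘L S = 1) :
    IsSelfAdjoint (S ∘L (A₀ + B ∘L X) ∘L T) :=
  stmt_13_general A₀ A₁ B hA₀ hA₁ X hRic S T hSsa hSsq hST hTS
end
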